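/- arXiv:0902.0549 — 2 statements merged into one kernel-verified Lean document; each statement's English description precedes it below -/
import Mathlib

section
/- If the subalgebra C(p,q) of C = C(p,q,z) is simple, then the nil radical R is the unique prime two-sided ideal of C. -/
open Classical in
/-- The weight of generator `i`: `1` on `P`, `-1` on `M`, `0` elsewhere. -/
noncomputable def cliffordWeight {ι : Type} (P M : Set ι) (i : ι) : ℝ :=
  if i ∈ P then 1 else if i ∈ M then -1 else 0

/-- The diagonal bilinear form `B(x,y) = ∑ i, w i * x i * y i` on `ι →₀ ℝ`. -/
noncomputable def cliffordBilin {ι : Type} (P M : Set ι) :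
    (ι →₀ ℝ) →ₗ[ℝ] (ι →₀ ℝ) →ₗ[ℝ] ℝ :=
  Finsupp.lsum ℝ fun i =>
    LinearMap.toSpanSingleton ℝ ((ι →₀ ℝ) →ₗ[ℝ] ℝ) (cliffordWeight P M i • Finsupp.lapply i)

/-- The quadratic form of `C(p,q,z)`. -/
noncomputable def cliffordQ {ι : Type} (P M : Set ι) : QuadraticForm ℝ (ι →₀ ℝ) :=
  LinearMap.BilinMap.toQuadraticMap (cliffordBilin P M)

/-- The Clifford algebra `C(p,q,z)` (`Z` is the complement of `P ∪ M` in `ι`). -/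
noncomputable abbrev Cl {ι : Type} (P M : Set ι) := CliffordAlgebra (cliffordQ P M)

/-- The generator `e_i` of `C(p,q,z)`. -/
noncomputable def gen {ι : Type} (P M : Set ι) (i : ι) : Cl P M :=
  CliffordAlgebra.ι (cliffordQ P M) (Finsupp.single i 1)

/-- The product `e_I` over a finite ordered subset `I`. -/
noncomputable def prodGen {ι : Type} [LinearOrder ι] (P M : Set ι) (s : Finset ι) : Cl P M :=
  ((s.sort (· ≤ ·)).map (gen P M)).prod

/-- The subalgebra `C(p,q)` generated by the `e_λ`, `λ ∈ P ∪ M`. -/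
noncomputable def Cpq {ι : Type} (P M : Set ι) : Subalgebra ℝ (Cl P M) :=
  Algebra.adjoin ℝ (gen P M '' (P ∪ M))

/-- The ideal generated by the nilpotent generators `e_λ`, `λ ∈ Z`. -/
noncomputable def nilGenIdeal {ι : Type} (P M Z : Set ι) : TwoSidedIdeal (Cl P M) :=
  TwoSidedIdeal.span (gen P M '' Z)

/-- The nil radical of a ring: the supremum (sum) of all nil two-sided ideals. -/
def nilRad (A : Type*) [Ring A] : TwoSidedIdeal A :=
  sSup {I : TwoSidedIdeal A | ∀ x ∈ I, IsNilpotent x}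

/-- A two-sided ideal `I` is nilpotent: `Iⁿ = 0`, phrased via products of `n` elements. -/
def TwoSidedIdeal.IsNilpotentIdeal {A : Type*} [Ring A] (I : TwoSidedIdeal A) : Prop :=
  ∃ n : ℕ, 0 < n ∧ ∀ l : List A, l.length = n → (∀ x ∈ l, x ∈ I) → l.prod = 0

/-- A two-sided ideal is prime. -/
def TwoSidedIdeal.IsPrimeIdeal {A : Type*} [Ring A] (I : TwoSidedIdeal A) : Prop :=
  I ≠ ⊤ ∧ ∀ J K : TwoSidedIdeal A, (∀ a ∈ J, ∀ b ∈ K, a * b ∈ I) → J ≤ I ∨ K ≤ I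

/-!
Restricting coordinates to `P ∪ M` preserves the quadratic form, since the weights vanish off
`P ∪ M`; it therefore induces an algebra retraction `C → C(p,q)` whose kernel is `R`. Its
kernel is prime because `C(p,q)` is simple, and any prime `I ⊇ R` equals `R`, since `I` pulled
back to `C(p,q)` is a proper ideal, hence zero. Finally every prime contains `R`: for `λ ∈ Z`,
`e_λ c = ĉ e_λ` with `ĉ` the grade involute of `c`, so `e_λ C e_λ = 0` as `e_λ² = 0`.
-/

namespace TwoSidedIdeal

variable {A B : Type*} [Ring A] [Ring B] {F : Type*} [FunLike F A B] [RingHomClass F A B]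

theorem isPrimeIdeal_iff_forall_mul_mul_mem {I : TwoSidedIdeal A} :
    I.IsPrimeIdeal ↔ I ≠ ⊤ ∧ ∀ a b : A, (∀ c, a * c * b ∈ I) → a ∈ I ∨ b ∈ I := by
  refine ⟨fun ⟨hI, hprime⟩ => ⟨hI, fun a b hab => ?_⟩, fun ⟨hI, hab⟩ => ⟨hI, fun J K hJK => ?_⟩⟩
  · have hmul_b : ∀ v ∈ span {b}, ∀ c, a * c * v ∈ I := by
      intro v hv
      induction hv using span_induction with
      | mem x hx => rw [Set.mem_singleton_iff.mp hx]; exact hab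
      | zero => simp [I.zero_mem]
      | add x y _ _ hx hy => intro c; rw [mul_add]; exact I.add_mem (hx c) (hy c)
      | neg x _ hx => intro c; rw [mul_neg]; exact I.neg_mem (hx c)
      | left_absorb d x _ hx => intro c; rw [← mul_assoc, mul_assoc a]; exact hx (c * d)
      | right_absorb d x _ hx => intro c; rw [← mul_assoc]; exact I.mul_mem_right _ _ (hx c)
    have hmul : ∀ u ∈ span {a}, ∀ v ∈ span {b}, u * v ∈ I := by
      intro u hu
      induction hu using span_induction with
      | mem x hx => intro v hv; simpa [Set.mem_singleton_iff.mp hx] using hmul_b v hv 1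
      | zero => simp [I.zero_mem]
      | add x y _ _ hx hy => intro v hv; rw [add_mul]; exact I.add_mem (hx v hv) (hy v hv)
      | neg x _ hx => intro v hv; rw [neg_mul]; exact I.neg_mem (hx v hv)
      | left_absorb d x _ hx => intro v hv; rw [mul_assoc]; exact I.mul_mem_left _ _ (hx v hv)
      | right_absorb d x _ hx =>
          intro v hv; rw [mul_assoc]; exact hx _ ((span {b}).mul_mem_left _ _ hv)
    exact (hprime _ _ hmul).imp (· (subset_span rfl)) (· (subset_span rfl))
  · by_contra! h
    obtain ⟨⟨a, haJ, haI⟩, ⟨b, hbK, hbI⟩⟩ := And.imp SetLike.not_le_iff_exists.mp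
      SetLike.not_le_iff_exists.mp h
    exact (hab a b fun c => hJK _ (J.mul_mem_right _ _ haJ) _ hbK).elim haI hbI

theorem IsPrimeIdeal.comap {I : TwoSidedIdeal B} (hI : I.IsPrimeIdeal) (f : F)
    (hf : Function.Surjective f) : (I.comap f).IsPrimeIdeal := by
  rw [isPrimeIdeal_iff_forall_mul_mul_mem] at hI ⊢
  refine ⟨fun h => hI.1 (I.eq_top ?_), fun a b hab => ?_⟩
  · simpa [mem_comap] using (I.comap f).one_mem h
  · simp only [mem_comap] at hab ⊢
    refine hI.2 (f a) (f b) fun c => ?_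
    obtain ⟨c, rfl⟩ := hf c
    simpa using hab c

theorem isPrimeIdeal_bot [IsSimpleRing A] : (⊥ : TwoSidedIdeal A).IsPrimeIdeal := by
  refine ⟨bot_ne_top, fun J K hJK => or_iff_not_imp_left.mpr fun hJ b hb => ?_⟩
  have h1 : (1 : A) ∈ J := IsSimpleRing.one_mem_of_ne_bot J (fun h => hJ h.le)
  simpa using hJK 1 h1 b hb

theorem ker_eq_comap_bot (f : F) : ker f = (⊥ : TwoSidedIdeal B).comap f := by
  ext; simp [mem_ker, mem_comap]

theorem eq_ker_of_ker_le [IsSimpleRing B] {G : Type*} [FunLike G B A] [RingHomClass G B A]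
    (f : F) (s : G) (hfs : ∀ b, f (s b) = b)
    {I : TwoSidedIdeal A} (hI : I ≠ ⊤) (hle : ker f ≤ I) : I = ker f := by
  refine le_antisymm (fun a ha => ?_) hle
  have hcomap : I.comap s = ⊥ := by
    refine (IsSimpleRing.simple.eq_bot_or_eq_top _).resolve_right fun h => hI (I.eq_top ?_)
    simpa [mem_comap] using (I.comap s).one_mem h
  have hsfa : s (f a) ∈ I := by
    have : s (f a) - a ∈ I := hle (by simp [mem_ker, hfs])
    simpa using I.add_mem this ha
  rw [mem_ker, ← mem_bot, ← hcomap, mem_comap]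
  exact hsfa

end TwoSidedIdeal

section CliffordPQZ

variable {ι : Type} (P M : Set ι)

theorem cliffordWeight_eq_zero {i : ι} (hi : i ∉ P ∪ M) : cliffordWeight P M i = 0 := by
  simp only [Set.mem_union, not_or] at hi
  simp [cliffordWeight, hi.1, hi.2]

theorem cliffordBilin_apply (x y : ι →₀ ℝ) :
    cliffordBilin P M x y = x.sum fun i a => cliffordWeight P M i * a * y i := by
  rw [cliffordBilin, Finsupp.lsum_apply, Finsupp.sum, LinearMap.coe_sum, Finset.sum_apply]
  refine Finset.sum_congr rfl fun i _ => ?_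
  simp [LinearMap.toSpanSingleton_apply]
  ring

variable {P M}

theorem cliffordBilin_eq_zero_left {x : ι →₀ ℝ} (hx : ↑x.support ⊆ (P ∪ M)ᶜ) (y : ι →₀ ℝ) :
    cliffordBilin P M x y = 0 := by
  rw [cliffordBilin_apply]
  refine Finset.sum_eq_zero fun i hi => ?_
  simp [cliffordWeight_eq_zero P M (hx hi)]

theorem cliffordBilin_eq_zero_right {x : ι →₀ ℝ} (hx : ↑x.support ⊆ (P ∪ M)ᶜ) (y : ι →₀ ℝ) :
    cliffordBilin P M y x = 0 := by
  rw [cliffordBilin_apply]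
  refine Finset.sum_eq_zero fun i _ => ?_
  by_cases hi : x i = 0
  · simp [hi]
  · simp [cliffordWeight_eq_zero P M (hx (Finsupp.mem_support_iff.mpr hi))]

theorem cliffordQ_add_eq_left {x y : ι →₀ ℝ} (hy : ↑y.support ⊆ (P ∪ M)ᶜ) :
    cliffordQ P M (x + y) = cliffordQ P M x := by
  change cliffordBilin P M (x + y) (x + y) = cliffordBilin P M x x
  simp only [map_add, LinearMap.add_apply, cliffordBilin_eq_zero_left hy,
    cliffordBilin_eq_zero_right hy, add_zero]

theorem cliffordQ_eq_zero {x : ι →₀ ℝ} (hx : ↑x.support ⊆ (P ∪ M)ᶜ) : cliffordQ P M x = 0 :=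
  cliffordBilin_eq_zero_left hx x

theorem polar_cliffordQ_eq_zero {x : ι →₀ ℝ} (hx : ↑x.support ⊆ (P ∪ M)ᶜ) (y : ι →₀ ℝ) :
    QuadraticMap.polar (cliffordQ P M) x y = 0 := by
  rw [cliffordQ, LinearMap.BilinMap.polar_toQuadraticMap, cliffordBilin_eq_zero_left hx,
    cliffordBilin_eq_zero_right hx, add_zero]

variable (P M) in
open Classical in
noncomputable def restrictIsometry : cliffordQ P M →qᵢ cliffordQ P M where
  toLinearMap := (Finsupp.supported ℝ ℝ (P ∪ M)).subtype ∘ₗ Finsupp.restrictDom ℝ ℝ (P ∪ M)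
  map_app' x := by
    conv_rhs => rw [← Finsupp.filter_add_filter_not x (· ∈ P ∪ M)]
    refine (cliffordQ_add_eq_left fun i hi => ?_).symm
    exact (Finset.mem_filter.mp hi).2

open Classical in
theorem restrictIsometry_apply (v : ι →₀ ℝ) :
    restrictIsometry P M v = v.filter (· ∈ P ∪ M) :=
  rfl

theorem ι_mem_Cpq {v : ι →₀ ℝ} (hv : v ∈ Finsupp.supported ℝ ℝ (P ∪ M)) :
    CliffordAlgebra.ι (cliffordQ P M) v ∈ Cpq P M := by
  rw [Finsupp.supported_eq_span_single] at hv
  refine Submodule.span_le (p := (Cpq P M).toSubmodule.comap _) |>.mpr ?_ hv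
  rintro _ ⟨i, hi, rfl⟩
  exact Algebra.subset_adjoin ⟨i, hi, rfl⟩

theorem ι_mem_nilGenIdeal {Z : Set ι} {v : ι →₀ ℝ} (hv : v ∈ Finsupp.supported ℝ ℝ Z) :
    CliffordAlgebra.ι (cliffordQ P M) v ∈ nilGenIdeal P M Z := by
  rw [Finsupp.supported_eq_span_single] at hv
  induction hv using Submodule.span_induction with
  | mem x hx => obtain ⟨i, hi, rfl⟩ := hx; exact TwoSidedIdeal.subset_span ⟨i, hi, rfl⟩
  | zero => simp
  | add x y _ _ hx hy => rw [map_add]; exact TwoSidedIdeal.add_mem _ hx hy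
  | smul c x _ hx => rw [map_smul, Algebra.smul_def]; exact TwoSidedIdeal.mul_mem_left _ _ _ hx

theorem map_restrictIsometry_mem_Cpq (x : Cl P M) :
    CliffordAlgebra.map (restrictIsometry P M) x ∈ Cpq P M := by
  induction x using CliffordAlgebra.induction with
  | algebraMap r => rw [AlgHom.commutes]; exact Subalgebra.algebraMap_mem _ _
  | ι v => rw [CliffordAlgebra.map_apply_ι]; exact ι_mem_Cpq (Submodule.coe_mem _)
  | mul a b ha hb => rw [map_mul]; exact Subalgebra.mul_mem _ ha hb
  | add a b ha hb => rw [map_add]; exact Subalgebra.add_mem _ ha hb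

variable (P M) in
noncomputable def toCpq : Cl P M →ₐ[ℝ] Cpq P M :=
  (CliffordAlgebra.map (restrictIsometry P M)).codRestrict (Cpq P M) map_restrictIsometry_mem_Cpq

open Classical in
theorem coe_toCpq_ι (v : ι →₀ ℝ) :
    (toCpq P M (CliffordAlgebra.ι _ v) : Cl P M) =
      CliffordAlgebra.ι (cliffordQ P M) (v.filter (· ∈ P ∪ M)) :=
  CliffordAlgebra.map_apply_ι _ _

theorem toCpq_coe (x : Cpq P M) : toCpq P M x = x := by
  refine Subtype.ext ?_
  suffices h : Cpq P M ≤
      AlgHom.equalizer (CliffordAlgebra.map (restrictIsometry P M)) (.id ℝ _) from h x.2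
  refine Algebra.adjoin_le ?_
  rintro _ ⟨i, hi, rfl⟩
  classical
  change CliffordAlgebra.map _ (gen P M i) = gen P M i
  rw [gen, CliffordAlgebra.map_apply_ι, restrictIsometry_apply, Finsupp.filter_single_of_pos _ hi]

theorem sub_toCpq_mem (x : Cl P M) : x - toCpq P M x ∈ nilGenIdeal P M (P ∪ M)ᶜ := by
  induction x using CliffordAlgebra.induction with
  | algebraMap r => simp
  | ι v =>
      classical
      rw [coe_toCpq_ι, ← map_sub,
        sub_eq_of_eq_add' (Finsupp.filter_add_filter_not v (· ∈ P ∪ M)).symm]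
      exact ι_mem_nilGenIdeal fun i hi => (Finset.mem_filter.mp hi).2
  | mul a b ha hb =>
      have : a * b - toCpq P M (a * b) =
          (a - toCpq P M a) * b + toCpq P M a * (b - toCpq P M b) := by
        rw [map_mul, Subalgebra.coe_mul]; noncomm_ring
      rw [this]
      exact TwoSidedIdeal.add_mem _ (TwoSidedIdeal.mul_mem_right _ _ _ ha)
        (TwoSidedIdeal.mul_mem_left _ _ _ hb)
  | add a b ha hb =>
      rw [map_add, Subalgebra.coe_add, add_sub_add_comm]
      exact TwoSidedIdeal.add_mem _ ha hb

theorem ker_toCpq : TwoSidedIdeal.ker (toCpq P M) = nilGenIdeal P M (P ∪ M)ᶜ := by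
  refine le_antisymm (fun x hx => ?_) (TwoSidedIdeal.span_le.mpr ?_)
  · simpa [(TwoSidedIdeal.mem_ker _).mp hx] using sub_toCpq_mem x
  · rintro _ ⟨z, hz, rfl⟩
    classical
    rw [SetLike.mem_coe, TwoSidedIdeal.mem_ker, ← Subtype.coe_inj, gen, coe_toCpq_ι,
      Finsupp.filter_single_of_neg _ hz, map_zero, ZeroMemClass.coe_zero]

theorem support_single_subset_compl {z : ι} (hz : z ∉ P ∪ M) :
    ↑(Finsupp.single z (1 : ℝ)).support ⊆ (P ∪ M)ᶜ := by
  simpa using hz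

theorem gen_mul_eq_involute_mul {z : ι} (hz : z ∉ P ∪ M) (c : Cl P M) :
    gen P M z * c = CliffordAlgebra.involute c * gen P M z := by
  induction c using CliffordAlgebra.induction with
  | algebraMap r => rw [CliffordAlgebra.involute.commutes, Algebra.commutes]
  | ι v =>
      have := CliffordAlgebra.ι_mul_ι_add_swap (Q := cliffordQ P M) (Finsupp.single z 1) v
      rw [polar_cliffordQ_eq_zero (support_single_subset_compl hz), map_zero] at this
      rw [CliffordAlgebra.involute_ι, neg_mul, gen]
      exact eq_neg_of_add_eq_zero_left this
  | mul a b ha hb => rw [map_mul, ← mul_assoc, ha, mul_assoc, hb, mul_assoc]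
  | add a b ha hb => rw [mul_add, ha, hb, map_add, add_mul]

theorem gen_mul_mul_gen {z : ι} (hz : z ∉ P ∪ M) (c : Cl P M) :
    gen P M z * c * gen P M z = 0 := by
  rw [gen_mul_eq_involute_mul hz, mul_assoc, gen, CliffordAlgebra.ι_sq_scalar,
    cliffordQ_eq_zero (support_single_subset_compl hz), map_zero, mul_zero]

end CliffordPQZ

theorem nilradical_unique_prime_of_simple_general {ι : Type} (P M Z : Set ι)
    (hPZ : Disjoint P Z) (hMZ : Disjoint M Z)
    (hU : P ∪ M ∪ Z = Set.univ)
    (hs : IsSimpleRing (Cpq P M)) :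
    ∀ I : TwoSidedIdeal (Cl P M), I.IsPrimeIdeal ↔ I = nilGenIdeal P M Z := by
  obtain rfl : Z = (P ∪ M)ᶜ :=
    (IsCompl.of_eq (disjoint_sup_left.mpr ⟨hPZ, hMZ⟩).eq_bot hU).compl_eq.symm
  intro I
  rw [← ker_toCpq]
  refine ⟨fun hI => ?_, fun hI => hI ▸ ?_⟩
  · refine TwoSidedIdeal.eq_ker_of_ker_le (toCpq P M) (Cpq P M).val toCpq_coe hI.1 ?_
    rw [ker_toCpq, nilGenIdeal, TwoSidedIdeal.span_le]
    rintro _ ⟨z, hz, rfl⟩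
    have hprime := (TwoSidedIdeal.isPrimeIdeal_iff_forall_mul_mul_mem.mp hI).2
    exact or_self_iff.mp (hprime _ _ fun c => gen_mul_mul_gen hz c ▸ I.zero_mem)
  · rw [TwoSidedIdeal.ker_eq_comap_bot]
    exact TwoSidedIdeal.isPrimeIdeal_bot.comap _ fun x => ⟨x, toCpq_coe x⟩

/-- STATEMENT 5: if `C(p,q)` is simple then the nil radical `R` is the unique prime
two-sided ideal of `C(p,q,z)`. -/
theorem nilradical_unique_prime_of_simple {ι : Type} (P M Z : Set ι)
    (hPM : Disjoint P M) (hPZ : Disjoint P Z) (hMZ : Disjoint M Z)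
    (hU : P ∪ M ∪ Z = Set.univ)
    (hs : IsSimpleRing (Cpq P M)) :
    ∀ I : TwoSidedIdeal (Cl P M), I.IsPrimeIdeal ↔ I = nilGenIdeal P M Z :=
  nilradical_unique_prime_of_simple_general P M Z hPZ hMZ hU hs
end

section
/- The Clifford algebra C = C(p,q,z) is left Artinian if and only if both p + q < ∞ and z < ∞, i.e., if and only if P ∪ M and Z are both finite. -/
/-!
If `ι` is finite, `C` is linearly isomorphic to the exterior algebra of `ℝ^ι`, hence
finite-dimensional and Artinian. If `ι` is infinite, infinitely many generators share one weight
`w ∈ {1, -1, 0}`. Grouping them in fours, the elements `x = e_a - w e_b e_c e_d` are square-zero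
(even when `e_a` is a unit) and pairwise anticommute, so with `pₙ = x₀ ⋯ xₙ₋₁` the left ideals
`C pₙ` descend. If `C pₙ = C pₙ₊₁`, then `pₙ₊₁ = pₙ xₙ ∈ C pₙ₊₁ xₙ = C pₙ xₙ xₙ = 0`, whereas
contracting successively with the duals of the leading generators `e_a` shows `pₙ₊₁ ≠ 0`.
-/

def Anticommute {A : Type*} [Ring A] (a b : A) : Prop :=
  a * b = -(b * a)

namespace Anticommute

variable {A : Type*} [Ring A] {a b c : A}

theorem symm (h : Anticommute a b) : Anticommute b a := by
  rw [Anticommute, h, neg_neg]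

theorem mul_right (hb : Anticommute a b) (hc : Anticommute a c) : Commute a (b * c) := by
  rw [Commute, SemiconjBy, ← mul_assoc, hb, neg_mul, mul_assoc, hc, mul_neg, neg_neg, mul_assoc]

theorem mul_commute (hb : Anticommute a b) (hc : Commute a c) : Anticommute a (b * c) := by
  rw [Anticommute, ← mul_assoc, hb, neg_mul, mul_assoc, hc.eq, mul_assoc]

theorem sub_right (hb : Anticommute a b) (hc : Anticommute a c) : Anticommute a (b - c) := by
  rw [Anticommute, mul_sub, sub_mul, hb, hc, neg_sub_neg, neg_sub]

theorem smul_right {R : Type*} [CommRing R] [Algebra R A] (hb : Anticommute a b) (r : R) :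
    Anticommute a (r • b) := by
  rw [Anticommute, mul_smul_comm, smul_mul_assoc, hb, smul_neg]

theorem sub_mul_self (h : Anticommute a b) : (a - b) * (a - b) = a * a + b * b := by
  rw [sub_mul, mul_sub, mul_sub, h.symm]
  abel

theorem mul_mul_self (h : Anticommute a b) : a * b * (a * b) = -(a * a * (b * b)) := by
  rw [mul_assoc, ← mul_assoc b, h.symm, neg_mul, mul_neg, ← mul_assoc, ← mul_assoc, mul_assoc]

theorem commute_or_anticommute_list_prod {l : List A} (h : ∀ b ∈ l, Anticommute a b) :
    Commute a l.prod ∨ Anticommute a l.prod := by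
  induction l with
  | nil => exact Or.inl (Commute.one_right a)
  | cons b t ih =>
    rw [List.prod_cons]
    have hb := h b List.mem_cons_self
    rcases ih fun c hc => h c (List.mem_cons_of_mem b hc) with ht | ht
    · exact Or.inr (hb.mul_commute ht)
    · exact Or.inl (hb.mul_right ht)

end Anticommute

section OddElements

variable {R A : Type*} [CommRing R] [Ring A] [Algebra R A] {a b c d y : A}

theorem Anticommute.sub_smul_mul_mul (ha : Anticommute y a) (hb : Anticommute y b)
    (hc : Anticommute y c) (hd : Anticommute y d) (r : R) :
    Anticommute y (a - r • (b * (c * d))) :=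
  ha.sub_right ((hb.mul_commute (hc.mul_right hd)).smul_right r)

/-- `(w • b c d)² = -w⁵ = -w` cancels `a² = w`. -/
theorem sub_smul_mul_mul_mul_self_eq_zero {w : R} (hw : w ^ 3 = w)
    (ha : a * a = algebraMap R A w) (hb : b * b = algebraMap R A w)
    (hc : c * c = algebraMap R A w) (hd : d * d = algebraMap R A w)
    (hab : Anticommute a b) (hac : Anticommute a c) (had : Anticommute a d)
    (hbc : Anticommute b c) (hbd : Anticommute b d) (hcd : Anticommute c d) :
    (a - w • (b * (c * d))) * (a - w • (b * (c * d))) = 0 := by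
  have hbcd : b * (c * d) * (b * (c * d)) = -algebraMap R A (w ^ 3) := by
    rw [(hbc.mul_right hbd).symm.mul_mul_mul_comm, hcd.mul_mul_self, hb, hc, hd, mul_neg,
      ← map_mul, ← map_mul, pow_three]
  have hw5 : w + -(w * w * w ^ 3) = 0 := by linear_combination -(w ^ 2 + 1) * hw
  rw [((hab.mul_commute (hac.mul_right had)).smul_right w).sub_mul_self, smul_mul_smul_comm,
    hbcd, ha, smul_neg, Algebra.smul_def, ← map_mul, ← map_neg, ← map_add, hw5, map_zero]

end OddElements

section Chain

variable {A : Type*} [Ring A]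

theorem list_prod_map_ne_zero_of_contraction [Nontrivial A] {κ : Type*} {x : κ → A}
    (D : κ → A →+ A) (hD_one : ∀ k, D k 1 = 0)
    (hD_self : ∀ k y, D k y = 0 → D k (x k * y) = y)
    (hD_ne : ∀ j k, j ≠ k → ∀ y, D k (x j * y) = -(x j * D k y))
    {l : List κ} (hl : l.Nodup) : (l.map x).prod ≠ 0 := by
  have hD_prod : ∀ k (l : List κ), k ∉ l → D k (l.map x).prod = 0 := by
    intro k l hk
    induction l with
    | nil => exact hD_one k
    | cons j t ih =>
      rw [List.map_cons, List.prod_cons, hD_ne j k (List.ne_of_not_mem_cons hk).symm,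
        ih (List.not_mem_of_not_mem_cons hk), mul_zero, neg_zero]
  induction l with
  | nil => exact one_ne_zero
  | cons k t ih =>
    intro h
    rw [List.nodup_cons] at hl
    apply ih hl.2
    rw [← hD_self k _ (hD_prod k t hl.1), ← List.prod_cons, ← List.map_cons, h, map_zero]

theorem not_isArtinianRing_of_anticommute {x : ℕ → A} (hsq : ∀ n, x n * x n = 0)
    (hanti : ∀ m n, m ≠ n → Anticommute (x m) (x n))
    (hprod : ∀ n, ((List.range n).map x).prod ≠ 0) : ¬ IsArtinianRing A := by
  intro hA
  set p : ℕ → A := fun n => ((List.range n).map x).prod with hp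
  have hp_succ (n : ℕ) : p (n + 1) = p n * x n := by
    simp only [hp, List.range_succ, List.map_append, List.prod_append, List.map_singleton,
      List.prod_singleton]
  have hp_mul_mem (n : ℕ) : p n * x n ∈ Ideal.span {p n} := by
    rw [Ideal.mem_span_singleton']
    have hx : ∀ b ∈ (List.range n).map x, Anticommute (x n) b := by
      simp only [List.mem_map, List.mem_range]
      rintro _ ⟨m, hm, rfl⟩
      exact hanti n m hm.ne'
    rcases Anticommute.commute_or_anticommute_list_prod hx with h | h
    · exact ⟨x n, h.eq⟩
    · exact ⟨-x n, by rw [neg_mul]; exact Eq.symm h.symm⟩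
  have hanti_span : Antitone fun n => Ideal.span {p n} := by
    refine antitone_nat_of_succ_le fun n => ?_
    rw [Ideal.span_singleton_le_iff_mem, hp_succ]
    exact hp_mul_mem n
  obtain ⟨n, hn⟩ := IsArtinian.monotone_stabilizes ⟨_, hanti_span.dual_right⟩
  have hn_mem : p n ∈ Ideal.span {p (n + 1)} := by
    rw [show Ideal.span {p (n + 1)} = Ideal.span {p n} from (hn (n + 1) n.le_succ).symm]
    exact Ideal.subset_span rfl
  obtain ⟨c, hc⟩ := Ideal.mem_span_singleton'.mp hn_mem
  apply hprod (n + 1)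
  change p (n + 1) = 0
  rw [hp_succ, ← hc, hp_succ, mul_assoc, mul_assoc, hsq, mul_zero, mul_zero]

end Chain

section CliffordGenerators

variable {ι : Type} (P M : Set ι)

open Classical in
theorem cliffordBilin_single_single (i j : ι) :
    cliffordBilin P M (Finsupp.single i 1) (Finsupp.single j 1)
      = if j = i then cliffordWeight P M i else 0 := by
  simp only [cliffordBilin, Finsupp.lsum_single, LinearMap.toSpanSingleton_apply_one,
    LinearMap.smul_apply, Finsupp.lapply_apply, Finsupp.single_apply, smul_eq_mul,
    mul_ite, mul_one, mul_zero]

theorem cliffordWeight_mem (i : ι) : cliffordWeight P M i ∈ ({1, -1, 0} : Set ℝ) := by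
  unfold cliffordWeight
  split_ifs <;> simp

theorem cliffordWeight_pow_three (i : ι) : cliffordWeight P M i ^ 3 = cliffordWeight P M i := by
  unfold cliffordWeight
  split_ifs <;> norm_num

theorem cliffordQ_single (i : ι) :
    cliffordQ P M (Finsupp.single i 1) = cliffordWeight P M i := by
  rw [cliffordQ, LinearMap.BilinMap.toQuadraticMap_apply, cliffordBilin_single_single, if_pos rfl]

theorem gen_mul_self (i : ι) :
    gen P M i * gen P M i = algebraMap ℝ (Cl P M) (cliffordWeight P M i) := by
  rw [gen, CliffordAlgebra.ι_sq_scalar, cliffordQ_single]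

theorem anticommute_gen {i j : ι} (h : i ≠ j) : Anticommute (gen P M i) (gen P M j) := by
  have h_polar :
      QuadraticMap.polar (cliffordQ P M) (Finsupp.single i 1) (Finsupp.single j 1) = 0 := by
    rw [cliffordQ, LinearMap.BilinMap.polar_toQuadraticMap, cliffordBilin_single_single,
      cliffordBilin_single_single, if_neg h, if_neg h.symm, add_zero]
  have h_add := CliffordAlgebra.ι_mul_ι_add_swap (Q := cliffordQ P M)
    (Finsupp.single i 1) (Finsupp.single j 1)
  rw [h_polar, map_zero] at h_add
  exact eq_neg_of_add_eq_zero_left h_add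

noncomputable def contractGen (i : ι) : Cl P M →ₗ[ℝ] Cl P M :=
  CliffordAlgebra.contractLeft (Finsupp.lapply i)

theorem contractGen_one (i : ι) : contractGen P M i 1 = 0 :=
  CliffordAlgebra.contractLeft_one _ _

open Classical in
theorem contractGen_gen_mul (i j : ι) (y : Cl P M) :
    contractGen P M i (gen P M j * y)
      = (if j = i then y else 0) - gen P M j * contractGen P M i y := by
  rw [contractGen, gen, CliffordAlgebra.contractLeft_ι_mul, Finsupp.lapply_apply,
    Finsupp.single_apply, ite_smul, one_smul, zero_smul]

end CliffordGenerators

section Blocks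

variable {ι : Type} (P M : Set ι) {f : ℕ → ι}

noncomputable def block (f : ℕ → ι) (w : ℝ) (k : ℕ) : Cl P M :=
  gen P M (f (4 * k)) -
    w • (gen P M (f (4 * k + 1)) * (gen P M (f (4 * k + 2)) * gen P M (f (4 * k + 3))))

variable {P M}

theorem block_mul_self (hf : Function.Injective f) {w : ℝ}
    (hw : ∀ n, cliffordWeight P M (f n) = w) (k : ℕ) : block P M f w k * block P M f w k = 0 := by
  have hsq (n : ℕ) : gen P M (f n) * gen P M (f n) = algebraMap ℝ (Cl P M) w := by
    rw [gen_mul_self, hw]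
  have hanti (r s : ℕ) (h : r ≠ s) : Anticommute (gen P M (f r)) (gen P M (f s)) :=
    anticommute_gen P M (hf.ne h)
  refine sub_smul_mul_mul_mul_self_eq_zero (hw 0 ▸ cliffordWeight_pow_three P M (f 0))
    (hsq _) (hsq _) (hsq _) (hsq _) ?_ ?_ ?_ ?_ ?_ ?_ <;> exact hanti _ _ (by omega)

theorem anticommute_gen_block (hf : Function.Injective f) (w : ℝ) {m k : ℕ} (hmk : m / 4 ≠ k) :
    Anticommute (gen P M (f m)) (block P M f w k) := by
  refine Anticommute.sub_smul_mul_mul ?_ ?_ ?_ ?_ w <;>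
    exact anticommute_gen P M (hf.ne (by omega))

theorem anticommute_block (hf : Function.Injective f) (w : ℝ) {j k : ℕ} (hjk : j ≠ k) :
    Anticommute (block P M f w j) (block P M f w k) := by
  refine Anticommute.sub_smul_mul_mul ?_ ?_ ?_ ?_ w <;>
    exact (anticommute_gen_block hf w (by omega)).symm

theorem contractGen_block_mul_self (hf : Function.Injective f) (w : ℝ) (k : ℕ) {y : Cl P M}
    (hy : contractGen P M (f (4 * k)) y = 0) :
    contractGen P M (f (4 * k)) (block P M f w k * y) = y := by
  simp [block, sub_mul, mul_assoc, contractGen_gen_mul, hf.eq_iff, hy]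

theorem contractGen_block_mul_of_ne (hf : Function.Injective f) (w : ℝ) {j k : ℕ} (hjk : j ≠ k)
    (y : Cl P M) :
    contractGen P M (f (4 * k)) (block P M f w j * y)
      = -(block P M f w j * contractGen P M (f (4 * k)) y) := by
  have h0 : 4 * j ≠ 4 * k := by omega
  have h1 : 4 * j + 1 ≠ 4 * k := by omega
  have h2 : 4 * j + 2 ≠ 4 * k := by omega
  have h3 : 4 * j + 3 ≠ 4 * k := by omega
  simp only [block, sub_mul, smul_mul_assoc, mul_assoc, map_sub, map_smul, contractGen_gen_mul,
    hf.eq_iff, h0, h1, h2, h3, if_false, zero_sub, mul_neg, neg_neg, smul_neg]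
  abel

end Blocks

section Artinian

variable {ι : Type} (P M : Set ι)

theorem not_isArtinianRing_of_injective {f : ℕ → ι} (hf : Function.Injective f) {w : ℝ}
    (hw : ∀ n, cliffordWeight P M (f n) = w) : ¬ IsArtinianRing (Cl P M) := by
  refine not_isArtinianRing_of_anticommute (block_mul_self hf hw)
    (fun _ _ => anticommute_block hf w) fun n => ?_
  exact list_prod_map_ne_zero_of_contraction
    (fun k => (contractGen P M (f (4 * k))).toAddMonoidHom) (fun _ => contractGen_one P M _)
    (fun k _ => contractGen_block_mul_self hf w k) (fun _ _ => contractGen_block_mul_of_ne hf w)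
    List.nodup_range

theorem moduleFinite_cl [Finite ι] : Module.Finite ℝ (Cl P M) :=
  have := Module.Finite.of_basis
    ((Finsupp.basisSingleOne (R := ℝ) (ι := ι)).reindex (Finite.equivFin ι)).ExteriorAlgebra
  Module.Finite.equiv (CliffordAlgebra.equivExterior (cliffordQ P M)).symm

theorem isArtinianRing_cl_iff_finite : IsArtinianRing (Cl P M) ↔ Finite ι := by
  refine ⟨fun hA => ?_, fun _ => have := moduleFinite_cl P M; IsArtinianRing.of_finite ℝ _⟩
  by_contra hι
  rw [not_finite_iff_infinite] at hι
  have : Finite (Set.range (cliffordWeight P M)) :=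
    (Set.toFinite _).subset (Set.range_subset_iff.2 (cliffordWeight_mem P M))
  obtain ⟨w, hw⟩ := Finite.exists_infinite_fiber (Set.rangeFactorization (cliffordWeight P M))
  let e := Infinite.natEmbedding (Set.rangeFactorization (cliffordWeight P M) ⁻¹' {w})
  refine not_isArtinianRing_of_injective P M (f := fun n => (e n).1)
    (Subtype.val_injective.comp e.injective) (w := w.1) (fun n => ?_) hA
  exact congrArg Subtype.val (e n).2

end Artinian

theorem artinian_iff_finite_general {ι : Type} (P M Z : Set ι)
    (hU : P ∪ M ∪ Z = Set.univ) :
    IsArtinianRing (Cl P M) ↔ (P ∪ M).Finite ∧ Z.Finite := by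
  rw [isArtinianRing_cl_iff_finite]
  refine ⟨fun _ => ⟨Set.toFinite _, Set.toFinite _⟩, fun ⟨hPM, hZ⟩ => ?_⟩
  exact Set.finite_univ_iff.mp (hU ▸ hPM.union hZ)

/-- STATEMENT 10: `C(p,q,z)` is left Artinian iff `p + q < ∞` and `z < ∞`. -/
theorem artinian_iff_finite {ι : Type} (P M Z : Set ι)
    (hPM : Disjoint P M) (hPZ : Disjoint P Z) (hMZ : Disjoint M Z)
    (hU : P ∪ M ∪ Z = Set.univ) :
    IsArtinianRing (Cl P M) ↔ (P ∪ M).Finite ∧ Z.Finite :=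
  artinian_iff_finite_general P M Z hU
end
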